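/- arXiv:0904.0436 — 2 statements merged into one kernel-verified Lean document; each statement's English description precedes it below -/
import Mathlib

section
/- Let K be a topological space equipped with a semigroup structure whose multiplication K × K → K is jointly continuous, let H be a topological group, and let θ : H → K and ψ : K → H be continuous multiplicative maps such that ψ(θ(s)) = s for all s ∈ H and such that θ(1) is a two-sided identity for K. Set K₀ = ψ⁻¹({1}), a closed subset of K with the subspace topology. Then: (i) the action map H × K₀ → K₀, (s,k) ↦ θ(s)·k·θ(s⁻¹), is jointly continuous; and (ii) the map φ : H × K₀ → K, φ(s,k) = k·θ(s), is a homeomorphism from H × K₀ (with the product topology) onto K, with continuous inverse k ↦ (ψ(k), k·θ(ψ(k)⁻¹)). -/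
/-!
Since `ψ ∘ θ = id` and both maps are multiplicative, right multiplication by `θ (ψ k)⁻¹` moves
`k` into the fibre `K₀ = ψ⁻¹ {1}` and right multiplication by `θ (ψ k)` moves it back, because
`k * θ s * θ s⁻¹ = k * θ 1 = k`. Both directions, like the conjugation action, are composites of
`θ`, `ψ`, inversion and multiplication, hence continuous.
-/

section Algebra

variable {K H : Type*} [Semigroup K] [Group H] {θ : H → K} {ψ : K → H}

lemma mul_theta_mul_theta_inv (hθ : ∀ s t : H, θ (s * t) = θ s * θ t)
    (hunit : ∀ k : K, k * θ 1 = k) (k : K) (s : H) : k * θ s * θ s⁻¹ = k := by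
  rw [mul_assoc, ← hθ, mul_inv_cancel, hunit]

lemma mul_theta_inv_mul_theta (hθ : ∀ s t : H, θ (s * t) = θ s * θ t)
    (hunit : ∀ k : K, k * θ 1 = k) (k : K) (s : H) : k * θ s⁻¹ * θ s = k := by
  simpa using mul_theta_mul_theta_inv hθ hunit k s⁻¹

lemma psi_mul_theta (hψ : ∀ k l : K, ψ (k * l) = ψ k * ψ l) (hψθ : ∀ s : H, ψ (θ s) = s)
    (k : K) (s : H) : ψ (k * θ s) = ψ k * s := by
  rw [hψ, hψθ]

lemma psi_theta_mul_mul_theta_inv (hψ : ∀ k l : K, ψ (k * l) = ψ k * ψ l)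
    (hψθ : ∀ s : H, ψ (θ s) = s) (s : H) (k : K) : ψ (θ s * k * θ s⁻¹) = s * ψ k * s⁻¹ := by
  rw [psi_mul_theta hψ hψθ, hψ, hψθ]

def fiberProdEquiv (hθ : ∀ s t : H, θ (s * t) = θ s * θ t)
    (hψ : ∀ k l : K, ψ (k * l) = ψ k * ψ l) (hψθ : ∀ s : H, ψ (θ s) = s)
    (hunit : ∀ k : K, k * θ 1 = k) : H × {k : K // ψ k = 1} ≃ K where
  toFun p := (p.2 : K) * θ p.1
  invFun k := (ψ k, ⟨k * θ (ψ k)⁻¹, by rw [psi_mul_theta hψ hψθ, mul_inv_cancel]⟩)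
  left_inv := by
    rintro ⟨s, k, hk⟩
    have hψks : ψ (k * θ s) = s := by rw [psi_mul_theta hψ hψθ, hk, one_mul]
    ext
    · exact hψks
    · simp only [hψks, mul_theta_mul_theta_inv hθ hunit]
  right_inv k := mul_theta_inv_mul_theta hθ hunit k (ψ k)

def fiberConjAct (hψ : ∀ k l : K, ψ (k * l) = ψ k * ψ l) (hψθ : ∀ s : H, ψ (θ s) = s)
    (p : H × {k : K // ψ k = 1}) : {k : K // ψ k = 1} :=
  ⟨θ p.1 * p.2 * θ p.1⁻¹, by rw [psi_theta_mul_mul_theta_inv hψ hψθ, p.2.2, mul_one, mul_inv_cancel]⟩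

end Algebra

section Topology

variable {K H : Type*} [TopologicalSpace K] [Semigroup K] [ContinuousMul K]
  [TopologicalSpace H] [Group H] [IsTopologicalGroup H] {θ : H → K} {ψ : K → H}

def fiberProdHomeomorph (hθc : Continuous θ) (hψc : Continuous ψ)
    (hθ : ∀ s t : H, θ (s * t) = θ s * θ t)
    (hψ : ∀ k l : K, ψ (k * l) = ψ k * ψ l) (hψθ : ∀ s : H, ψ (θ s) = s)
    (hunit : ∀ k : K, k * θ 1 = k) : (H × {k : K // ψ k = 1}) ≃ₜ K where
  toEquiv := fiberProdEquiv hθ hψ hψθ hunit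
  continuous_toFun := by
    change Continuous fun p : H × {k : K // ψ k = 1} => (p.2 : K) * θ p.1
    fun_prop
  continuous_invFun := by
    change Continuous fun k => (ψ k, (⟨k * θ (ψ k)⁻¹, _⟩ : {k : K // ψ k = 1}))
    fun_prop

lemma continuous_fiberConjAct (hθc : Continuous θ) (hψ : ∀ k l : K, ψ (k * l) = ψ k * ψ l)
    (hψθ : ∀ s : H, ψ (θ s) = s) : Continuous (fiberConjAct hψ hψθ) := by
  unfold fiberConjAct
  fun_prop

end Topology

/-- Topological version: `K` a topological semigroup with jointly continuous
multiplication, `H` a topological group, `θ, ψ` continuous multiplicative maps with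
`ψ ∘ θ = id` and `θ 1` a two-sided identity.  With `K₀ = ψ⁻¹ {1}` (subspace topology):
(i) the action `(s,k) ↦ θ s * k * θ s⁻¹` is a jointly continuous map `H × K₀ → K₀`, and
(ii) `φ(s,k) = k * θ s` is a homeomorphism `H × K₀ ≃ₜ K` with inverse
`k ↦ (ψ k, k * θ (ψ k)⁻¹)`. -/
theorem statement2 {K H : Type*} [TopologicalSpace K] [Semigroup K] [ContinuousMul K]
    [TopologicalSpace H] [Group H] [IsTopologicalGroup H]
    (θ : H → K) (ψ : K → H) (hθc : Continuous θ) (hψc : Continuous ψ)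
    (hθ : ∀ s t : H, θ (s * t) = θ s * θ t)
    (hψ : ∀ k l : K, ψ (k * l) = ψ k * ψ l)
    (hψθ : ∀ s : H, ψ (θ s) = s)
    (hunit : ∀ k : K, θ 1 * k = k ∧ k * θ 1 = k) :
    (∃ act : H × {k : K // ψ k = 1} → {k : K // ψ k = 1},
      Continuous act ∧
      ∀ p : H × {k : K // ψ k = 1}, (act p : K) = θ p.1 * (p.2 : K) * θ p.1⁻¹) ∧
    (∃ e : (H × {k : K // ψ k = 1}) ≃ₜ K,
      (∀ p : H × {k : K // ψ k = 1}, e p = (p.2 : K) * θ p.1) ∧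
      (∀ k : K, (e.symm k).1 = ψ k ∧ ((e.symm k).2 : K) = k * θ (ψ k)⁻¹)) :=
  ⟨⟨fiberConjAct hψ hψθ, continuous_fiberConjAct hθc hψ hψθ, fun _ => rfl⟩,
    ⟨fiberProdHomeomorph hθc hψc hθ hψ hψθ fun k => (hunit k).2, fun _ => rfl,
      fun _ => ⟨rfl, rfl⟩⟩⟩
end

section
/- Let X be a T1 topological space and let A ⊆ X be a compact subset. Suppose that for every function f : X → ℂ with the property that for each ε > 0 the set {x ∈ X : ε ≤ |f(x)|} is finite, the restriction of f to A is continuous (i.e. f is continuous on A for the subspace topology). Then A, with the subspace topology, is discrete; in particular, since A is compact, A is finite. -/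
/-!
For `x ∈ A`, the indicator function of `{x}` has finite support, hence lies in `c₀`; its
continuity on `A` at `x` makes `{x}` a neighbourhood of `x` within `A`. So every point of `A`
is isolated, and a compact discrete set is finite.
-/

open Topology Filter Set Function

theorem Set.Finite.setOf_le_norm {X E : Type*} [SeminormedAddGroup E] {f : X → E}
    (hf : (support f).Finite) {ε : ℝ} (hε : 0 < ε) : {x | ε ≤ ‖f x‖}.Finite :=
  hf.subset fun _ hx hx0 => hε.not_ge (by simpa [hx0] using hx)

theorem singleton_mem_nhdsWithin_of_continuousWithinAt_indicator {X M : Type*}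
    [TopologicalSpace X] [TopologicalSpace M] [T1Space M] [Zero M] [One M] [NeZero (1 : M)]
    {s : Set X} {x : X} (h : ContinuousWithinAt (({x} : Set X).indicator (1 : X → M)) s x) :
    {x} ∈ 𝓝[s] x := by
  have := h.preimage_mem_nhdsWithin (compl_singleton_mem_nhds (x := (0 : M)) (by simp))
  simpa [preimage, indicator] using this

theorem statement8_general {X : Type*} [TopologicalSpace X] {A : Set X}
    (hA : IsCompact A)
    (h : ∀ f : X → ℂ, (∀ ε : ℝ, 0 < ε → {x : X | ε ≤ ‖f x‖}.Finite) →
      ContinuousOn f A) :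
    DiscreteTopology A ∧ A.Finite := by
  have hA_discrete : IsDiscrete A := IsDiscrete.of_nhdsWithin fun x hx => by
    have hc₀ : ∀ ε : ℝ, 0 < ε →
        {y : X | ε ≤ ‖({x} : Set X).indicator (1 : X → ℂ) y‖}.Finite :=
      fun _ hε => Set.Finite.setOf_le_norm (by simp) hε
    exact le_pure_iff.2 (singleton_mem_nhdsWithin_of_continuousWithinAt_indicator (h _ hc₀ x hx))
  exact ⟨isDiscrete_iff_discreteTopology.1 hA_discrete, hA.finite hA_discrete⟩

/-- Let `X` be a T1 space and `A ⊆ X` compact.  If every function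
`f : X → ℂ` such that `{x : ε ≤ |f x|}` is finite for each `ε > 0` (i.e. every element of
`c₀` of the discretisation of `X`) restricts to a continuous function on `A`, then `A` with
the subspace topology is discrete; in particular, being compact, `A` is finite. -/
theorem statement8 {X : Type*} [TopologicalSpace X] [T1Space X] {A : Set X}
    (hA : IsCompact A)
    (h : ∀ f : X → ℂ, (∀ ε : ℝ, 0 < ε → {x : X | ε ≤ ‖f x‖}.Finite) →
      ContinuousOn f A) :
    DiscreteTopology A ∧ A.Finite :=
  statement8_general hA h
end
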